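/- The partition function Z is differentiable on (0,∞), the mean satisfies ρ(φ) = φ·Z′(φ)/Z(φ), the map φ ↦ ρ(φ) is differentiable on (0,∞) with ρ′(φ) = φ^{−1} σ²(φ) > 0, and consequently ρ is strictly increasing on (0,∞). -/

import Mathlib

/-! By (M), `c (k + 1) → ∞`, so the ratio test makes `∑ b^k / c(k)!` converge for every `b`, and
then so do the moment sums `M_m(b) = ∑ k^m b^k / c(k)!`. They may be differentiated termwise,
giving `φ M_m′ = M_{m+1}`. As `Z = M₀` and `ρ = M₁ / M₀ = φ Z′ / Z`, the quotient rule gives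
`φ ρ′ = M₂ / M₀ - (M₁ / M₀)² = σ²`, which is positive because `μ_φ` charges both `0` and `1`. -/

noncomputable section

/-- `c(k)! = ∏_{m=1}^k c(m)`, with `c(0)! = 1`. -/
def cfact (c : ℕ → ℝ) : ℕ → ℝ
  | 0 => 1
  | k + 1 => cfact c k * c (k + 1)

/-- The partition function `Z(φ) = ∑_{k ≥ 0} φ^k / c(k)!`. -/
def Zfun (c : ℕ → ℝ) (φ : ℝ) : ℝ := ∑' k : ℕ, φ ^ k / cfact c k

/-- The grand canonical single-site measure `μ_φ({k}) = φ^k / (Z(φ) c(k)!)`. -/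
def mu (c : ℕ → ℝ) (φ : ℝ) (k : ℕ) : ℝ := φ ^ k / (Zfun c φ * cfact c k)

/-- The mean `ρ(φ)` of `μ_φ`. -/
def rho (c : ℕ → ℝ) (φ : ℝ) : ℝ := ∑' k : ℕ, (k : ℝ) * mu c φ k

/-- The variance `σ²(φ)` of `μ_φ`. -/
def sigSq (c : ℕ → ℝ) (φ : ℝ) : ℝ := ∑' k : ℕ, ((k : ℝ) - rho c φ) ^ 2 * mu c φ k

open Filter Set

theorem tendsto_atTop_of_le_sub_add {f : ℕ → ℝ} {a : ℝ} {k₀ : ℕ} (hf : ∀ k, 0 ≤ f k)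
    (ha : 0 < a) (h : ∀ k, a ≤ f (k + k₀) - f k) : Tendsto f atTop atTop := by
  have hiter : ∀ n m : ℕ, f m + n * a ≤ f (m + n * k₀) := by
    intro n m
    induction n with
    | zero => simp
    | succ n ih =>
      have hstep := h (m + n * k₀)
      rw [show m + (n + 1) * k₀ = m + n * k₀ + k₀ by ring]
      push_cast
      linarith
  refine tendsto_atTop.2 fun M => ?_
  obtain ⟨n, hn⟩ := exists_nat_ge (M / a)
  rw [div_le_iff₀ ha] at hn
  filter_upwards [eventually_ge_atTop (n * k₀)] with k hk
  have hk' := hiter n (k - n * k₀)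
  rw [Nat.sub_add_cancel hk] at hk'
  linarith [hf (k - n * k₀)]

theorem summable_pow_mul_of_summable_pow_mul {a : ℕ → ℝ}
    (ha : ∀ b : ℝ, Summable fun k => b ^ k * a k) (m : ℕ) (b : ℝ) :
    Summable fun k : ℕ => (k : ℝ) ^ m * b ^ k * a k := by
  have hgeom := summable_pow_mul_geometric_of_norm_lt_one (R := ℝ) m (r := 2⁻¹) (by norm_num)
  refine Summable.of_norm_bounded ((ha (2 * b)).norm.mul_left (∑' k : ℕ, (k : ℝ) ^ m * 2⁻¹ ^ k))
    fun k : ℕ => ?_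
  calc ‖(k : ℝ) ^ m * b ^ k * a k‖ = (k : ℝ) ^ m * 2⁻¹ ^ k * ‖(2 * b) ^ k * a k‖ := by
        simp only [norm_mul, norm_pow, Real.norm_natCast, mul_pow, Real.norm_two, inv_pow]
        field_simp
    _ ≤ (∑' k : ℕ, (k : ℝ) ^ m * 2⁻¹ ^ k) * ‖(2 * b) ^ k * a k‖ := by
        gcongr
        exact hgeom.le_tsum k fun j _ => by positivity

/-- For `a k = (c(k)!)⁻¹`, the cases `m = 0, 1, 2` are `Z`, `φ Z′` and `φ (φ Z′)′`. -/
def powerMoment (a : ℕ → ℝ) (m : ℕ) (y : ℝ) : ℝ := ∑' k : ℕ, (k : ℝ) ^ m * y ^ k * a k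

theorem hasDerivAt_powerMoment {a : ℕ → ℝ} (ha : ∀ b : ℝ, Summable fun k => b ^ k * a k)
    (m : ℕ) {y : ℝ} (hy : y ≠ 0) :
    HasDerivAt (powerMoment a m) (y⁻¹ * powerMoment a (m + 1) y) y := by
  set R := |y| + 1
  have hR : 0 < R := by positivity
  have hyR : y ∈ Ioo (-R) R := abs_lt.1 (by linarith)
  have hshift : ∀ x : ℝ, x ≠ 0 → ∀ k : ℕ,
      (k : ℝ) ^ m * (k * x ^ (k - 1)) * a k = x⁻¹ * ((k : ℝ) ^ (m + 1) * x ^ k * a k) := by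
    intro x hx k
    cases k with
    | zero => simp
    | succ k =>
      rw [Nat.add_sub_cancel, pow_succ x k]
      field_simp
      ring
  have hbound : ∀ (k : ℕ), ∀ x ∈ Ioo (-R) R,
      ‖(k : ℝ) ^ m * (k * x ^ (k - 1)) * a k‖ ≤ R⁻¹ * ‖(k : ℝ) ^ (m + 1) * R ^ k * a k‖ := by
    intro k x hx
    calc ‖(k : ℝ) ^ m * (k * x ^ (k - 1)) * a k‖
        ≤ ‖(k : ℝ) ^ m * (k * R ^ (k - 1)) * a k‖ := by
          simp only [norm_mul, norm_pow, Real.norm_natCast, Real.norm_of_nonneg hR.le]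
          gcongr
          exact (abs_lt.2 hx).le
      _ = R⁻¹ * ‖(k : ℝ) ^ (m + 1) * R ^ k * a k‖ := by
          rw [hshift R hR.ne', norm_mul, norm_inv, Real.norm_of_nonneg hR.le]
  have htermwise := hasDerivAt_tsum_of_isPreconnected
    (g := fun (k : ℕ) (x : ℝ) => (k : ℝ) ^ m * x ^ k * a k)
    ((summable_pow_mul_of_summable_pow_mul ha (m + 1) R).norm.mul_left R⁻¹) isOpen_Ioo
    isPreconnected_Ioo (fun (k : ℕ) x _ => ((hasDerivAt_pow k x).const_mul _).mul_const (a k))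
    hbound hyR (summable_pow_mul_of_summable_pow_mul ha m y) hyR
  rwa [tsum_congr (hshift y hy), tsum_mul_left] at htermwise

theorem hasSum_sub_sq_mul {ι : Type*} {p x : ι → ℝ} {r s : ℝ} (h₀ : HasSum p 1)
    (h₁ : HasSum (fun i => x i * p i) r) (h₂ : HasSum (fun i => x i ^ 2 * p i) s) :
    HasSum (fun i => (x i - r) ^ 2 * p i) (s - r ^ 2) := by
  have h := (h₂.sub (h₁.mul_left (2 * r))).add (h₀.mul_left (r ^ 2))
  rw [show s - 2 * r * r + r ^ 2 * 1 = s - r ^ 2 by ring] at h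
  exact h.congr_fun fun i => by ring

theorem pos_of_hasSum_sub_sq_mul {ι : Type*} {p x : ι → ℝ} {r v : ℝ}
    (h : HasSum (fun i => (x i - r) ^ 2 * p i) v) (hp : ∀ i, 0 < p i) {i j : ι}
    (hij : x i ≠ x j) : 0 < v := by
  obtain ⟨l, hl⟩ : ∃ l, x l ≠ r := by
    by_cases hi : x i = r
    · exact ⟨j, fun hj => hij (hi.trans hj.symm)⟩
    · exact ⟨i, hi⟩
  exact hasSum_lt (f := 0) (g := fun i => (x i - r) ^ 2 * p i) (i := l)
    (fun k => mul_nonneg (sq_nonneg _) (hp k).le)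
    (mul_pos (pow_two_pos_of_ne_zero (sub_ne_zero.2 hl)) (hp l)) hasSum_zero h

section JumpRate

variable {c : ℕ → ℝ}

theorem cfact_pos (hcpos : ∀ k : ℕ, 1 ≤ k → 0 < c k) : ∀ k, 0 < cfact c k
  | 0 => one_pos
  | k + 1 => mul_pos (cfact_pos hcpos k) (hcpos (k + 1) (Nat.le_add_left 1 k))

theorem summable_pow_mul_inv_cfact (hcpos : ∀ k : ℕ, 1 ≤ k → 0 < c k)
    (hc : Tendsto (fun k => c (k + 1)) atTop atTop) (b : ℝ) :
    Summable fun k => b ^ k * (cfact c k)⁻¹ := by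
  refine summable_of_ratio_norm_eventually_le (r := 2⁻¹) (by norm_num) ?_
  filter_upwards [hc.eventually_ge_atTop (2 * |b|)] with k hk
  have hck := hcpos (k + 1) (Nat.le_add_left 1 k)
  simp only [norm_mul, norm_pow, norm_inv, Real.norm_eq_abs, cfact, pow_succ, mul_inv,
    abs_of_pos (cfact_pos hcpos k), abs_of_pos hck]
  have : |b| * (c (k + 1))⁻¹ ≤ 2⁻¹ := by
    rw [← div_eq_mul_inv, div_le_iff₀ hck]
    linarith
  calc |b| ^ k * |b| * ((cfact c k)⁻¹ * (c (k + 1))⁻¹)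
      = (|b| * (c (k + 1))⁻¹) * (|b| ^ k * (cfact c k)⁻¹) := by ring
    _ ≤ 2⁻¹ * (|b| ^ k * (cfact c k)⁻¹) := by
        have := cfact_pos hcpos k
        gcongr

theorem Zfun_eq_powerMoment : Zfun c = powerMoment (fun k => (cfact c k)⁻¹) 0 := by
  ext y
  simp [Zfun, powerMoment, div_eq_mul_inv]

theorem hasDerivAt_Zfun (hcpos : ∀ k : ℕ, 1 ≤ k → 0 < c k)
    (hc : Tendsto (fun k => c (k + 1)) atTop atTop) {φ : ℝ} (hφ : φ ≠ 0) :
    HasDerivAt (Zfun c) (φ⁻¹ * powerMoment (fun k => (cfact c k)⁻¹) 1 φ) φ := by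
  simpa only [← Zfun_eq_powerMoment] using
    hasDerivAt_powerMoment (summable_pow_mul_inv_cfact hcpos hc) 0 hφ

theorem hasSum_pow_mul_mu (hcpos : ∀ k : ℕ, 1 ≤ k → 0 < c k)
    (hc : Tendsto (fun k => c (k + 1)) atTop atTop) (m : ℕ) (φ : ℝ) :
    HasSum (fun k : ℕ => (k : ℝ) ^ m * mu c φ k)
      (powerMoment (fun k => (cfact c k)⁻¹) m φ / Zfun c φ) := by
  refine ((summable_pow_mul_of_summable_pow_mul (summable_pow_mul_inv_cfact hcpos hc) m
    φ).hasSum.div_const (Zfun c φ)).congr_fun fun k => ?_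
  unfold mu
  ring

theorem Zfun_pos (hcpos : ∀ k : ℕ, 1 ≤ k → 0 < c k)
    (hc : Tendsto (fun k => c (k + 1)) atTop atTop) {φ : ℝ} (hφ : 0 < φ) : 0 < Zfun c φ := by
  rw [Zfun_eq_powerMoment]
  refine (summable_pow_mul_of_summable_pow_mul (summable_pow_mul_inv_cfact hcpos hc) 0
    φ).tsum_pos (fun k => ?_) 0 (by simp [cfact])
  have := cfact_pos hcpos k
  positivity

theorem mu_pos (hcpos : ∀ k : ℕ, 1 ≤ k → 0 < c k)
    (hc : Tendsto (fun k => c (k + 1)) atTop atTop) {φ : ℝ} (hφ : 0 < φ) (k : ℕ) :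
    0 < mu c φ k :=
  div_pos (pow_pos hφ k) (mul_pos (Zfun_pos hcpos hc hφ) (cfact_pos hcpos k))

theorem rho_eq (hcpos : ∀ k : ℕ, 1 ≤ k → 0 < c k)
    (hc : Tendsto (fun k => c (k + 1)) atTop atTop) (φ : ℝ) :
    rho c φ = powerMoment (fun k => (cfact c k)⁻¹) 1 φ / Zfun c φ := by
  rw [rho]
  simpa only [pow_one] using (hasSum_pow_mul_mu hcpos hc 1 φ).tsum_eq

theorem hasSum_sigSq (hcpos : ∀ k : ℕ, 1 ≤ k → 0 < c k)
    (hc : Tendsto (fun k => c (k + 1)) atTop atTop) {φ : ℝ} (hφ : 0 < φ) :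
    HasSum (fun k : ℕ => ((k : ℝ) - rho c φ) ^ 2 * mu c φ k)
      (powerMoment (fun k => (cfact c k)⁻¹) 2 φ / Zfun c φ - rho c φ ^ 2) := by
  have h₀ := hasSum_pow_mul_mu hcpos hc 0 φ
  rw [← Zfun_eq_powerMoment, div_self (Zfun_pos hcpos hc hφ).ne'] at h₀
  refine hasSum_sub_sq_mul (by simpa using h₀) ?_ (hasSum_pow_mul_mu hcpos hc 2 φ)
  simpa only [pow_one, ← rho_eq hcpos hc] using hasSum_pow_mul_mu hcpos hc 1 φ

theorem sigSq_pos (hcpos : ∀ k : ℕ, 1 ≤ k → 0 < c k)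
    (hc : Tendsto (fun k => c (k + 1)) atTop atTop) {φ : ℝ} (hφ : 0 < φ) : 0 < sigSq c φ :=
  pos_of_hasSum_sub_sq_mul (hasSum_sigSq hcpos hc hφ).summable.hasSum (mu_pos hcpos hc hφ)
    (i := 0) (j := 1) (by norm_num)

theorem hasDerivAt_rho (hcpos : ∀ k : ℕ, 1 ≤ k → 0 < c k)
    (hc : Tendsto (fun k => c (k + 1)) atTop atTop) {φ : ℝ} (hφ : 0 < φ) :
    HasDerivAt (rho c) (φ⁻¹ * sigSq c φ) φ := by
  have hs := summable_pow_mul_inv_cfact hcpos hc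
  have hZ := Zfun_pos hcpos hc hφ
  rw [funext (rho_eq hcpos hc), sigSq, (hasSum_sigSq hcpos hc hφ).tsum_eq, rho_eq hcpos hc]
  rw [Zfun_eq_powerMoment] at hZ ⊢
  refine ((hasDerivAt_powerMoment hs 1 hφ.ne').div (hasDerivAt_powerMoment hs 0 hφ.ne')
    hZ.ne').congr_deriv ?_
  field_simp

end JumpRate

theorem stmt2_general (c : ℕ → ℝ) (a₂ : ℝ) (k₀ : ℕ)
    (hcpos : ∀ k : ℕ, 1 ≤ k → 0 < c k)
    (ha₂ : 0 < a₂)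
    (hM : ∀ k : ℕ, a₂ ≤ c (k + k₀) - c k) :
    DifferentiableOn ℝ (Zfun c) (Set.Ioi 0) ∧
    (∀ φ : ℝ, 0 < φ →
      rho c φ = φ * deriv (Zfun c) φ / Zfun c φ ∧
      HasDerivAt (rho c) (φ⁻¹ * sigSq c φ) φ ∧
      0 < φ⁻¹ * sigSq c φ) ∧
    StrictMonoOn (rho c) (Set.Ioi 0) := by
  have hc : Tendsto (fun k => c (k + 1)) atTop atTop :=
    tendsto_atTop_of_le_sub_add (fun k => (hcpos _ (Nat.le_add_left 1 k)).le) ha₂ fun k => by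
      simpa only [add_right_comm] using hM (k + 1)
  have hρ' : ∀ φ : ℝ, 0 < φ → 0 < φ⁻¹ * sigSq c φ := fun φ hφ =>
    mul_pos (inv_pos.2 hφ) (sigSq_pos hcpos hc hφ)
  refine ⟨fun φ hφ => (hasDerivAt_Zfun hcpos hc hφ.ne').differentiableAt.differentiableWithinAt,
    fun φ hφ => ⟨?_, hasDerivAt_rho hcpos hc hφ, hρ' φ hφ⟩, ?_⟩
  · rw [(hasDerivAt_Zfun hcpos hc hφ.ne').deriv, rho_eq hcpos hc, mul_inv_cancel_left₀ hφ.ne']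
  · refine strictMonoOn_of_hasDerivWithinAt_pos (convex_Ioi 0)
      (fun φ hφ => (hasDerivAt_rho hcpos hc hφ).continuousAt.continuousWithinAt)
      (fun φ hφ => ?_) (fun φ hφ => hρ' φ (interior_Ioi.subset hφ))
    rw [interior_Ioi] at hφ ⊢
    exact (hasDerivAt_rho hcpos hc hφ).hasDerivWithinAt

/-- `Z` is differentiable on `(0,∞)`, `ρ(φ) = φ Z′(φ)/Z(φ)`,
`ρ` is differentiable on `(0,∞)` with `ρ′(φ) = φ⁻¹ σ²(φ) > 0`, and consequently `ρ`
is strictly increasing on `(0,∞)`. -/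
theorem stmt2 (c : ℕ → ℝ) (a₁ a₂ : ℝ) (k₀ : ℕ)
    (hc0 : c 0 = 0) (hcpos : ∀ k : ℕ, 1 ≤ k → 0 < c k)
    (hLG : ∀ k : ℕ, |c (k + 1) - c k| ≤ a₁)
    (hk₀ : 1 ≤ k₀) (ha₂ : 0 < a₂)
    (hM : ∀ k : ℕ, a₂ ≤ c (k + k₀) - c k) :
    DifferentiableOn ℝ (Zfun c) (Set.Ioi 0) ∧
    (∀ φ : ℝ, 0 < φ →
      rho c φ = φ * deriv (Zfun c) φ / Zfun c φ ∧
      HasDerivAt (rho c) (φ⁻¹ * sigSq c φ) φ ∧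
      0 < φ⁻¹ * sigSq c φ) ∧
    StrictMonoOn (rho c) (Set.Ioi 0) :=
  stmt2_general c a₂ k₀ hcpos ha₂ hM
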